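/- arXiv:2104.12974 — 5 statements merged into one kernel-verified Lean document; each statement's English description precedes it below -/
import Mathlib

section
/- Let p ≥ 1 and q ≥ 2 be integers and set m := p + q − 1. Then for every integer j with 1 ≤ j ≤ m, one has C(2m−j−1, m−1) = A_{p,q−1}(j) + B_{p,q−1}(j) + C_{p,q−1}(j). -/
/-- Binomial coefficient on integers: `C a b = 0` whenever `a < b` or `a < 0`,
    and otherwise the usual binomial coefficient. -/
def intChoose (a b : ℤ) : ℤ :=
  if a < b ∨ a < 0 then 0 else (a.toNat.choose b.toNat : ℤ)

/-- `F p s = C (2p − s − 1) (p − 1)`. -/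
def F (p s : ℤ) : ℤ := intChoose (2 * p - s - 1) (p - 1)

/-- `P s t = C (s + t − 2) (s − 1)` if `s, t ≥ 1`, and `0` otherwise. -/
def P (s t : ℤ) : ℤ :=
  if 1 ≤ s ∧ 1 ≤ t then intChoose (s + t - 2) (s - 1) else 0

/-- `A p q j = ∑_{s=1}^{p} ∑_{t=1}^{q, s+t=j} F_p(s)·F_q(t)`. -/
noncomputable def A (p q j : ℤ) : ℤ :=
  ∑ s ∈ Finset.Icc (1 : ℤ) p, ∑ t ∈ Finset.Icc (1 : ℤ) q,
    if s + t = j then F p s * F q t else 0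

/-- `B p q j = ∑_{s=1}^{p} ∑_{t=1}^{q} F_p(s)·F_q(t)·P(s−j+1, t)`. -/
noncomputable def B (p q j : ℤ) : ℤ :=
  ∑ s ∈ Finset.Icc (1 : ℤ) p, ∑ t ∈ Finset.Icc (1 : ℤ) q,
    F p s * F q t * P (s - j + 1) t

/-- `Cc p q j = ∑_{s=1}^{p} ∑_{t=j}^{q} F_p(s)·F_q(t)·P(s, t−j+1)`. -/
noncomputable def Cc (p q j : ℤ) : ℤ :=
  ∑ s ∈ Finset.Icc (1 : ℤ) p, ∑ t ∈ Finset.Icc j q,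
    F p s * F q t * P s (t - j + 1)

/-!
Everything reduces to the parallel-summation form of Vandermonde's identity,
`∑ₜ C(X - t, a) C(t - Y, b) = C(X - Y + 1, a + b + 1)`, which is Chu–Vandermonde after upper
negation; for `intChoose` the sum may run over any range containing its support.
Write `q` for `q - 1` and `N = 2q + s - j - 1`. For fixed `s`, the `t`-sums of `A + B` and of `Cc`
are instances of it, giving `F_p(s) · (C(N, q - 1) + C(N, q + s - 1))`. Summing the first terms
over `s ∈ [1, p]` is again Vandermonde, except that the range `s ∈ [j - q, 0]` is missing.
Expanding `F_p(s)` for `s ≤ 0` as a Vandermonde sum over `u ∈ [1, p]` and exchanging the two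
sums shows that the missing part equals the sum of the second terms.
-/

open Finset

lemma Ring.choose_neg_natCast_add_one (a k : ℕ) :
    Ring.choose (-(a + 1 : ℤ)) k = (-1) ^ k * (a + k).choose a := by
  rw [Ring.choose_neg, Int.negOnePow_def,
    show ((a : ℤ) + 1 + k - 1) = ((a + k : ℕ) : ℤ) by push_cast; ring,
    Ring.choose_natCast, Nat.choose_symm_add, Units.smul_def]
  simp

theorem Nat.sum_antidiagonal_add_choose_mul_add_choose (a b n : ℕ) :
    ∑ ij ∈ antidiagonal n, (a + ij.1).choose a * (b + ij.2).choose b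
      = (a + b + 1 + n).choose (a + b + 1) := by
  have h := Ring.add_choose_eq (r := -(a + 1 : ℤ)) (s := -(b + 1 : ℤ)) n (Commute.all _ _)
  rw [show -(a + 1 : ℤ) + -(b + 1) = -((a + b + 1 : ℕ) + 1) by push_cast; ring] at h
  simp only [Ring.choose_neg_natCast_add_one] at h
  have hsign : ∀ ij ∈ antidiagonal n,
      (-1 : ℤ) ^ ij.1 * ((a + ij.1).choose a : ℤ) * ((-1) ^ ij.2 * ((b + ij.2).choose b : ℤ))
        = (-1) ^ n * ((a + ij.1).choose a * (b + ij.2).choose b : ℕ) := by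
    intro ij hij
    rw [← mem_antidiagonal.mp hij]
    push_cast; ring
  rw [sum_congr rfl hsign, ← mul_sum] at h
  exact_mod_cast (mul_left_cancel₀ (pow_ne_zero n (by norm_num)) h).symm

lemma intChoose_eq_zero_of_lt {a b : ℤ} (h : a < b) : intChoose a b = 0 :=
  if_pos (Or.inl h)

lemma intChoose_natCast (a b : ℕ) : intChoose a b = a.choose b := by
  unfold intChoose
  split_ifs with h
  · rw [Nat.choose_eq_zero_of_lt (by omega)]; simp
  · simp

lemma intChoose_symm {n k : ℤ} (hk : 0 ≤ k) (hkn : k ≤ n) :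
    intChoose n (n - k) = intChoose n k := by
  lift n to ℕ using hk.trans hkn
  lift k to ℕ using hk
  rw [← Nat.cast_sub (by omega), intChoose_natCast, intChoose_natCast, Nat.choose_symm (by omega)]

theorem sum_intChoose_mul_intChoose {S : Finset ℤ} {X Y a b : ℤ} (ha : 0 ≤ a) (hb : 0 ≤ b)
    (hS : Icc (Y + b) (X - a) ⊆ S) :
    ∑ t ∈ S, intChoose (X - t) a * intChoose (t - Y) b = intChoose (X - Y + 1) (a + b + 1) := by
  rw [← sum_subset hS fun t _ ht => ?vanish]
  case vanish =>
    rw [mem_Icc, not_and_or, not_le, not_le] at ht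
    rcases ht with ht | ht
    · rw [intChoose_eq_zero_of_lt (b := b) (by omega), mul_zero]
    · rw [intChoose_eq_zero_of_lt (b := a) (by omega), zero_mul]
  rcases lt_or_ge (X - a) (Y + b) with hempty | hle
  · rw [Icc_eq_empty_of_lt hempty, sum_empty, intChoose_eq_zero_of_lt (by omega)]
  lift a to ℕ using ha
  lift b to ℕ using hb
  obtain ⟨n, hn⟩ : ∃ n : ℕ, X - a = Y + b + n := ⟨(X - a - (Y + b)).toNat, by omega⟩
  have hbij : ∑ t ∈ Icc (Y + b) (X - a), intChoose (X - t) a * intChoose (t - Y) b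
      = ∑ ij ∈ antidiagonal n, (((b + ij.1).choose b * (a + ij.2).choose a : ℕ) : ℤ) := by
    refine sum_nbij' (fun t => ((t - Y - b).toNat, (X - a - t).toNat)) (fun ij => Y + b + ij.1)
      ?_ ?_ ?_ ?_ ?_
    · intro t ht
      simp only [mem_Icc, HasAntidiagonal.mem_antidiagonal] at ht ⊢
      omega
    · intro ij hij
      simp only [mem_Icc, HasAntidiagonal.mem_antidiagonal] at hij ⊢
      omega
    · intro t ht
      simp only [mem_Icc] at ht
      omega
    · intro ij hij
      simp only [HasAntidiagonal.mem_antidiagonal] at hij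
      ext <;> simp <;> omega
    · intro t ht
      simp only [mem_Icc] at ht
      rw [Nat.cast_mul, mul_comm, ← intChoose_natCast, ← intChoose_natCast]
      congr 2 <;> omega
  rw [hbij, ← Nat.cast_sum, Nat.sum_antidiagonal_add_choose_mul_add_choose,
    show X - Y + 1 = ((b + a + 1 + n : ℕ) : ℤ) by push_cast; omega,
    show (a : ℤ) + b + 1 = ((b + a + 1 : ℕ) : ℤ) by push_cast; ring, intChoose_natCast]

lemma F_eq_intChoose (p s : ℤ) : F p s = intChoose (2 * p - 1 - s) (p - 1) := by
  rw [F, sub_right_comm]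

lemma sum_F_mul_P_shift (q s j : ℤ) (hq : 1 ≤ q) (hs : 1 ≤ s) :
    ∑ t ∈ Icc j q, F q t * P s (t - j + 1) = intChoose (2 * q + s - j - 1) (q + s - 1) := by
  have hP : ∀ t ∈ Icc j q, P s (t - j + 1) = intChoose (t - (j + 1 - s)) (s - 1) := by
    intro t ht
    rw [mem_Icc] at ht
    rw [P, if_pos ⟨hs, by omega⟩]
    congr 1; ring
  rw [sum_congr rfl fun t ht => by rw [F_eq_intChoose, hP t ht],
    sum_intChoose_mul_intChoose (by omega) (by omega) (Icc_subset_Icc (by omega) (by omega))]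
  congr 1 <;> ring

lemma sum_F_ite_add_sum_F_mul_P (q s j : ℤ) (hq : 1 ≤ q) :
    (∑ t ∈ Icc 1 q, if s + t = j then F q t else 0) + ∑ t ∈ Icc 1 q, F q t * P (s - j + 1) t
      = intChoose (2 * q + s - j - 1) (q - 1) := by
  rcases le_or_gt j s with hjs | hsj
  · have hP : ∀ t ∈ Icc 1 q, P (s - j + 1) t = intChoose (t - (j + 1 - s)) (s - j) := by
      intro t ht
      rw [mem_Icc] at ht
      rw [P, if_pos ⟨by omega, ht.1⟩]
      congr 1 <;> ring
    rw [sum_eq_zero fun t ht => if_neg (by rw [mem_Icc] at ht; omega), zero_add,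
      sum_congr rfl fun t ht => by rw [F_eq_intChoose, hP t ht],
      sum_intChoose_mul_intChoose (by omega) (by omega) (Icc_subset_Icc (by omega) (by omega)),
      ← intChoose_symm (by omega) (by omega)]
    congr 1 <;> ring
  · have hB : ∑ t ∈ Icc 1 q, F q t * P (s - j + 1) t = 0 :=
      sum_eq_zero fun t _ => by rw [P, if_neg (by omega), mul_zero]
    rw [hB, add_zero]
    simp_rw [show ∀ t, (s + t = j ↔ j - s = t) from fun t => by omega]
    rw [sum_ite_eq]
    split_ifs with hmem
    · rw [F]; congr 1; ring
    · rw [mem_Icc] at hmem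
      rw [intChoose_eq_zero_of_lt (by omega)]

lemma sum_F_mul_intChoose_of_nonpos (p s : ℤ) (hp : 1 ≤ p) (hs : s ≤ 0) :
    ∑ u ∈ Icc 1 p, F p u * intChoose (u - 1 - s) (u - 1) = F p s := by
  have h : ∀ u ∈ Icc 1 p, intChoose (u - 1 - s) (u - 1) = intChoose (u - (s + 1)) (-s) := by
    intro u hu
    rw [mem_Icc] at hu
    rw [← intChoose_symm (by omega) (by omega)]
    congr 1 <;> ring
  rw [sum_congr rfl fun u hu => by rw [F_eq_intChoose, h u hu],
    sum_intChoose_mul_intChoose (by omega) (by omega) (Icc_subset_Icc (by omega) (by omega)),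
    F_eq_intChoose, ← intChoose_symm (by omega) (by omega)]
  congr 1 <;> ring

lemma sum_nonpos_F_mul_intChoose (p q j : ℤ) (hp : 1 ≤ p) (hq : 1 ≤ q) :
    ∑ s ∈ Icc (j - q) 0, F p s * intChoose (2 * q + s - j - 1) (q - 1)
      = ∑ u ∈ Icc 1 p, F p u * intChoose (2 * q + u - j - 1) (q + u - 1) := by
  calc ∑ s ∈ Icc (j - q) 0, F p s * intChoose (2 * q + s - j - 1) (q - 1)
      = ∑ s ∈ Icc (j - q) 0, ∑ u ∈ Icc 1 p,
          F p u * (intChoose (u - 1 - s) (u - 1) * intChoose (s - (j + 1 - 2 * q)) (q - 1)) := by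
        refine sum_congr rfl fun s hs => ?_
        rw [mem_Icc] at hs
        rw [← sum_F_mul_intChoose_of_nonpos p s hp hs.2, sum_mul]
        refine sum_congr rfl fun u _ => ?_
        rw [mul_assoc, show s - (j + 1 - 2 * q) = 2 * q + s - j - 1 by ring]
    _ = ∑ u ∈ Icc 1 p, F p u * ∑ s ∈ Icc (j - q) 0,
          intChoose (u - 1 - s) (u - 1) * intChoose (s - (j + 1 - 2 * q)) (q - 1) := by
        rw [sum_comm]
        simp_rw [mul_sum]
    _ = ∑ u ∈ Icc 1 p, F p u * intChoose (2 * q + u - j - 1) (q + u - 1) := by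
        refine sum_congr rfl fun u hu => ?_
        rw [mem_Icc] at hu
        rw [sum_intChoose_mul_intChoose (by omega) (by omega)
          (Icc_subset_Icc (by omega) (by omega))]
        congr 2 <;> ring

lemma sum_F_mul_add_intChoose (p q j : ℤ) (hp : 1 ≤ p) (hq : 1 ≤ q) :
    ∑ s ∈ Icc 1 p, F p s * (intChoose (2 * q + s - j - 1) (q - 1)
        + intChoose (2 * q + s - j - 1) (q + s - 1))
      = intChoose (2 * (p + q) - j - 1) (p + q - 1) := by
  have hdisj : Disjoint (Icc 1 p) (Icc (j - q) 0) :=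
    disjoint_left.mpr fun s h1 h2 => by rw [mem_Icc] at h1 h2; omega
  have hcover :
      Icc (j + 1 - 2 * q + (q - 1)) (2 * p - 1 - (p - 1)) ⊆ Icc 1 p ∪ Icc (j - q) 0 := by
    intro s hs
    simp only [mem_union, mem_Icc] at hs ⊢
    omega
  have hF : ∀ s, F p s * intChoose (2 * q + s - j - 1) (q - 1)
      = intChoose (2 * p - 1 - s) (p - 1) * intChoose (s - (j + 1 - 2 * q)) (q - 1) := fun s => by
    rw [F_eq_intChoose, show s - (j + 1 - 2 * q) = 2 * q + s - j - 1 by ring]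
  simp_rw [mul_add]
  rw [sum_add_distrib, ← sum_nonpos_F_mul_intChoose p q j hp hq, ← sum_union hdisj]
  simp_rw [hF]
  rw [sum_intChoose_mul_intChoose (by omega) (by omega) hcover]
  congr 1 <;> ring

lemma sum_A_B_Cc_row (p q s j : ℤ) (hq : 1 ≤ q) (hs : 1 ≤ s) :
    (∑ t ∈ Icc 1 q, if s + t = j then F p s * F q t else 0)
        + ∑ t ∈ Icc 1 q, F p s * F q t * P (s - j + 1) t
        + ∑ t ∈ Icc j q, F p s * F q t * P s (t - j + 1)
      = F p s * (intChoose (2 * q + s - j - 1) (q - 1)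
        + intChoose (2 * q + s - j - 1) (q + s - 1)) := by
  rw [← sum_F_ite_add_sum_F_mul_P q s j hq, ← sum_F_mul_P_shift q s j hq hs]
  simp only [mul_add, mul_sum, mul_ite, mul_zero, mul_assoc]

theorem key_binomial_identity_general (p q : ℤ) (hp : 1 ≤ p) (hq : 2 ≤ q)
    (j : ℤ) :
    intChoose (2 * (p + q - 1) - j - 1) ((p + q - 1) - 1)
      = A p (q - 1) j + B p (q - 1) j + Cc p (q - 1) j := by
  rw [A, B, Cc, ← sum_add_distrib, ← sum_add_distrib,
    sum_congr rfl fun s hs => sum_A_B_Cc_row p (q - 1) s j (by omega) (mem_Icc.mp hs).1,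
    sum_F_mul_add_intChoose p (q - 1) j hp (by omega)]
  congr 1 <;> ring

/-- for `p ≥ 1`, `q ≥ 2`, `m = p + q − 1` and `1 ≤ j ≤ m`,
    `C(2m−j−1, m−1) = A_{p,q−1}(j) + B_{p,q−1}(j) + C_{p,q−1}(j)`. -/
theorem key_binomial_identity (p q : ℤ) (hp : 1 ≤ p) (hq : 2 ≤ q)
    (j : ℤ) (hj1 : 1 ≤ j) (hjm : j ≤ p + q - 1) :
    intChoose (2 * (p + q - 1) - j - 1) ((p + q - 1) - 1)
      = A p (q - 1) j + B p (q - 1) j + Cc p (q - 1) j :=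
  key_binomial_identity_general p q hp hq j
end

section
/- Let p ≥ 1 and q ≥ 2 be integers and let j be an integer with 2 ≤ j ≤ p + q. Then ∑_{i=j−1}^{p+q−1} A_{p,q−1}(i) + D = A_{p,q}(j) + C(2p−j+1, p)·C(2q−3, q−1), where D := C(2p−j, p−1)·C(2q−2, q−1) if j−1 ≤ p, and D := 0 otherwise. -/
/-!
Expanding `A` as a double sum over `(s, t)` and summing over `i`, the left-hand sum becomes
`∑ₛ F_p(s) · ∑_{t ≥ max(1, j−1−s)} F_{q−1}(t)`, and the hockey-stick identity
`∑_{t ≥ a} F_{q−1}(t) = F_q(a+1)` turns the inner sum into `F_q(max(2, j−s))`.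
For `s < j−1` this is the `s`-th term of `A_{p,q}(j)`; for `s ≥ j−1` it is `F_p(s)·F_q(2)`, and the
hockey stick in `s` sums these to `C(2p−j+1, p)·C(2q−3, q−1)`. The one term of `A_{p,q}(j)` left
over, `s = j−1`, is `F_p(j−1)·F_q(1) = D`.
-/

open Finset

lemma intChoose_natCast_s2 (m i : ℕ) : intChoose m i = m.choose i := by
  rcases lt_or_ge m i with h | h
  · rw [intChoose_eq_zero_of_lt (by omega), Nat.choose_eq_zero_of_lt h, Nat.cast_zero]
  · simp [intChoose, h]

lemma intChoose_eq_add {n k : ℤ} (hk : 1 ≤ k) :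
    intChoose n k = intChoose (n - 1) (k - 1) + intChoose (n - 1) k := by
  rcases lt_or_ge n k with hnk | hkn
  · simp [intChoose_eq_zero_of_lt, hnk, (by omega : n - 1 < k - 1), (by omega : n - 1 < k)]
  · obtain ⟨m, rfl⟩ : ∃ m : ℕ, n = m + 1 := ⟨(n - 1).toNat, by omega⟩
    obtain ⟨i, rfl⟩ : ∃ i : ℕ, k = i + 1 := ⟨(k - 1).toNat, by omega⟩
    rw [add_sub_cancel_right, add_sub_cancel_right]
    simp only [← Nat.cast_succ, intChoose_natCast_s2, Nat.choose_succ_succ, Nat.cast_add]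

lemma F_eq_zero_of_lt {p s : ℤ} (h : p < s) : F p s = 0 :=
  intChoose_eq_zero_of_lt (by omega)

lemma sum_Icc_F {p a : ℤ} (ha : 1 ≤ a) : ∑ s ∈ Icc a p, F p s = intChoose (2 * p - a) p := by
  rcases lt_or_ge (p + 1) a with hpa | hap
  · rw [Icc_eq_empty (by omega), sum_empty, intChoose_eq_zero_of_lt (by omega)]
  induction a, hap using Int.leInductionDown with
  | base => rw [Icc_eq_empty (by omega), sum_empty, intChoose_eq_zero_of_lt (by omega)]
  | pred a hap ih =>
    rw [← insert_Icc_add_one_left_eq_Icc (by omega), sum_insert (by simp), sub_add_cancel,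
      ih (by omega), intChoose_eq_add (n := 2 * p - (a - 1)) (by omega), F,
      show 2 * p - (a - 1) - 1 = 2 * p - a by ring]

lemma sum_Icc_F_sub_one {q a : ℤ} (ha : 1 ≤ a) :
    ∑ t ∈ Icc a (q - 1), F (q - 1) t = F q (a + 1) := by
  rw [sum_Icc_F ha, F]
  ring_nf

lemma sum_Icc_A {p q lo hi : ℤ} (hhi : p + q ≤ hi) :
    ∑ i ∈ Icc lo hi, A p q i = ∑ s ∈ Icc 1 p, F p s * ∑ t ∈ Icc (max 1 (lo - s)) q, F q t := by
  unfold A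
  rw [sum_comm]
  refine sum_congr rfl fun s hs => ?_
  have hinner : ∀ t ∈ Icc 1 q, (∑ i ∈ Icc lo hi, if s + t = i then F p s * F q t else 0) =
      if lo ≤ s + t then F p s * F q t else 0 := fun t ht => by
    rw [sum_ite_eq]
    exact if_congr (by simp only [mem_Icc] at hs ht ⊢; omega) rfl rfl
  rw [sum_comm, sum_congr rfl hinner, ← sum_filter, mul_sum]
  exact sum_congr (by ext t; simp only [mem_filter, mem_Icc]; omega) fun _ _ => rfl

lemma A_eq_sum (p q j : ℤ) :
    A p q j = ∑ s ∈ Icc 1 p, if s < j then F p s * F q (j - s) else 0 := by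
  unfold A
  refine sum_congr rfl fun s _ => ?_
  simp_rw [show ∀ t, (s + t = j) = (j - s = t) from fun t => propext (by omega)]
  rw [sum_ite_eq]
  by_cases hq : j - s ≤ q
  · exact if_congr (by simp only [mem_Icc]; omega) rfl rfl
  · rw [F_eq_zero_of_lt (p := q) (by omega), mul_zero, ite_self, ite_self]

theorem sum_A_step_general (p q : ℤ)
    (j : ℤ) (hj2 : 2 ≤ j) :
    (∑ i ∈ Finset.Icc (j - 1) (p + q - 1), A p (q - 1) i)
        + (if j - 1 ≤ p then intChoose (2 * p - j) (p - 1) * intChoose (2 * q - 2) (q - 1) else 0)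
      = A p q j + intChoose (2 * p - j + 1) p * intChoose (2 * q - 3) (q - 1) := by
  have hsum : ∑ i ∈ Icc (j - 1) (p + q - 1), A p (q - 1) i =
      ∑ s ∈ Icc 1 p, F p s * F q (max 2 (j - s)) := by
    rw [sum_Icc_A (by omega)]
    refine sum_congr rfl fun s _ => ?_
    rw [sum_Icc_F_sub_one (le_max_left _ _), show max 1 (j - 1 - s) + 1 = max 2 (j - s) by omega]
  have hdiag : (if j - 1 ≤ p then intChoose (2 * p - j) (p - 1) * intChoose (2 * q - 2) (q - 1)
      else 0) = ∑ s ∈ Icc 1 p, if s = j - 1 then F p s * F q 1 else 0 := by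
    rw [sum_ite_eq', F, F]
    exact if_congr (by simp only [mem_Icc]; omega) (by ring_nf) rfl
  have htail : intChoose (2 * p - j + 1) p * intChoose (2 * q - 3) (q - 1) =
      ∑ s ∈ Icc 1 p, if j - 1 ≤ s then F p s * F q 2 else 0 := by
    rw [← sum_filter, ← sum_mul, show (Icc 1 p).filter (j - 1 ≤ ·) = Icc (j - 1) p by
      ext s; simp only [mem_filter, mem_Icc]; omega, sum_Icc_F (by omega), F]
    ring_nf
  rw [hsum, hdiag, A_eq_sum, htail, ← sum_add_distrib, ← sum_add_distrib]
  refine sum_congr rfl fun s _ => ?_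
  rcases lt_trichotomy s (j - 1) with h | rfl | h
  · simp [h.ne, not_le.2 h, show max 2 (j - s) = j - s by omega, show s < j by omega]
  · simp [add_comm]
  · simp [h.ne', h.le, show max 2 (j - s) = 2 by omega, show ¬ s < j by omega]

/-- for `p ≥ 1`, `q ≥ 2`, `2 ≤ j ≤ p + q`,
  `∑_{i=j−1}^{p+q−1} A_{p,q−1}(i) + D = A_{p,q}(j) + C(2p−j+1, p)·C(2q−3, q−1)`,
  where `D = C(2p−j, p−1)·C(2q−2, q−1)` if `j−1 ≤ p`, else `D = 0`. -/
theorem sum_A_step (p q : ℤ) (hp : 1 ≤ p) (hq : 2 ≤ q)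
    (j : ℤ) (hj2 : 2 ≤ j) (hjpq : j ≤ p + q) :
    (∑ i ∈ Finset.Icc (j - 1) (p + q - 1), A p (q - 1) i)
        + (if j - 1 ≤ p then intChoose (2 * p - j) (p - 1) * intChoose (2 * q - 2) (q - 1) else 0)
      = A p q j + intChoose (2 * p - j + 1) p * intChoose (2 * q - 3) (q - 1) :=
  sum_A_step_general p q j hj2
end

section
/- Let p ≥ 1 and q ≥ 2 be integers and let j be an integer with 2 ≤ j ≤ p + q. Then ∑_{i=j−1}^{p+q−1} C_{p,q−1}(i) = C_{p,q}(j). -/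
/-!
Pascal's rule for `F` gives `F_q(t) = F_q(t+1) + F_{q-1}(t-1)`; substituted into `C_{p,q}(j)`, the
first part is `C_{p,q}(j+1)` after the shift `t ↦ t+1`, and the second is `C_{p,q-1}(j-1)`
after `t ↦ t-1`. So `C_{p,q}(j) = C_{p,q}(j+1) + C_{p,q-1}(j-1)`, and since `C_{p,q}(j)`
vanishes for `j > q`, unrolling this recurrence gives the sum.
-/

open Finset

theorem Finset.sum_Icc_add_right {α M : Type*} [AddCommMonoid α] [PartialOrder α]
    [IsOrderedCancelAddMonoid α] [ExistsAddOfLE α] [LocallyFiniteOrder α] [AddCommMonoid M]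
    (f : α → M) (a b c : α) : ∑ x ∈ Icc a b, f (x + c) = ∑ x ∈ Icc (a + c) (b + c), f x := by
  rw [← map_add_right_Icc, sum_map]
  rfl

theorem Finset.sum_Icc_eq_sum_Icc_of_eq_zero {α M : Type*} [LinearOrder α] [LocallyFiniteOrder α]
    [AddCommMonoid M] {f : α → M} {a b c : α} (hbc : b ≤ c) (hf : ∀ x, b < x → f x = 0) :
    ∑ x ∈ Icc a c, f x = ∑ x ∈ Icc a b, f x := by
  refine (sum_subset (Icc_subset_Icc le_rfl hbc) fun x hx hxb => hf x ?_).symm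
  simp only [mem_Icc, not_and, not_le] at hx hxb
  exact hxb hx.1

theorem Int.eq_sum_Icc_of_eq_add {M : Type*} [AddCommMonoid M] {f g : ℤ → M} {m : ℤ}
    (hg : ∀ j, m < j → g j = 0) (hrec : ∀ j, g j = g (j + 1) + f j) (j : ℤ) :
    g j = ∑ i ∈ Icc j m, f i := by
  obtain hmj | hjm := lt_or_ge m j
  · rw [hg j hmj, Icc_eq_empty_of_lt hmj, sum_empty]
  induction j, hjm using Int.leInductionDown with
  | base => rw [hrec, hg _ (lt_add_one m), Icc_self, sum_singleton, zero_add]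
  | pred k hkm ih =>
    rw [hrec, sub_add_cancel, ih, ← insert_Icc_add_one_left_eq_Icc (show k - 1 ≤ m by omega),
      sum_insert (by simp), sub_add_cancel, add_comm]

theorem intChoose_natCast_s4 (n k : ℕ) : intChoose n k = n.choose k := by
  unfold intChoose
  split_ifs
  · rw [Nat.choose_eq_zero_of_lt (by omega), Nat.cast_zero]
  · rfl

theorem intChoose_eq_add_s4 {b : ℤ} (a : ℤ) (hb : 1 ≤ b) :
    intChoose a b = intChoose (a - 1) b + intChoose (a - 1) (b - 1) := by
  obtain ha | ha := lt_or_ge a 1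
  · simp only [intChoose, if_pos (Or.inr (by omega : a - 1 < 0)),
      if_pos (Or.inl (by omega : a < b)), add_zero]
  obtain ⟨n, rfl⟩ : ∃ n : ℕ, a = n + 1 := ⟨(a - 1).toNat, by omega⟩
  obtain ⟨k, rfl⟩ : ∃ k : ℕ, b = k + 1 := ⟨(b - 1).toNat, by omega⟩
  rw [add_sub_cancel_right, add_sub_cancel_right, ← Nat.cast_succ, ← Nat.cast_succ,
    intChoose_natCast_s4, intChoose_natCast_s4, intChoose_natCast_s4, Nat.choose_succ_succ', Nat.cast_add,
    add_comm]

theorem F_eq_zero_of_lt_s4 {q t : ℤ} (h : q < t) : F q t = 0 :=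
  if_pos (Or.inl (by omega))

theorem F_eq_add {q : ℤ} (hq : 2 ≤ q) (t : ℤ) : F q t = F q (t + 1) + F (q - 1) (t - 1) := by
  unfold F
  rw [intChoose_eq_add_s4 _ (by omega : 1 ≤ q - 1)]
  congr 2 <;> ring

theorem Cc_eq_zero_of_lt (p : ℤ) {q j : ℤ} (h : q < j) : Cc p q j = 0 :=
  sum_eq_zero fun s _ => by rw [Icc_eq_empty_of_lt h, sum_empty]

theorem Cc_eq_add (p : ℤ) {q : ℤ} (hq : 2 ≤ q) (j : ℤ) :
    Cc p q j = Cc p q (j + 1) + Cc p (q - 1) (j - 1) := by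
  unfold Cc
  rw [← sum_add_distrib]
  refine sum_congr rfl fun s _ => ?_
  have hup : ∑ t ∈ Icc (j + 1) q, F p s * F q t * P s (t - (j + 1) + 1)
      = ∑ t ∈ Icc j q, F p s * F q (t + 1) * P s (t - j + 1) := by
    calc _ = ∑ t ∈ Icc (j + 1) (q + 1), F p s * F q t * P s (t - j) := by
          rw [sum_Icc_eq_sum_Icc_of_eq_zero (lt_add_one q).le
            fun t ht => by rw [F_eq_zero_of_lt_s4 ht, mul_zero, zero_mul]]
          exact sum_congr rfl fun t _ => by ring_nf
      _ = _ := by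
          rw [← sum_Icc_add_right]
          exact sum_congr rfl fun t _ => by ring_nf
  have hdown : ∑ t ∈ Icc (j - 1) (q - 1), F p s * F (q - 1) t * P s (t - (j - 1) + 1)
      = ∑ t ∈ Icc j q, F p s * F (q - 1) (t - 1) * P s (t - j + 1) := by
    calc _ = ∑ t ∈ Icc (j - 1 + 1) (q - 1 + 1),
              F p s * F (q - 1) (t - 1) * P s (t - 1 - (j - 1) + 1) := by
          rw [← sum_Icc_add_right]
          simp only [add_sub_cancel_right]
      _ = _ := by
          rw [sub_add_cancel, sub_add_cancel]
          exact sum_congr rfl fun t _ => by ring_nf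
  rw [hup, hdown, ← sum_add_distrib]
  exact sum_congr rfl fun t _ => by rw [F_eq_add hq]; ring

theorem sum_C_step_general (p q : ℤ) (hp : 1 ≤ p) (hq : 2 ≤ q) (j : ℤ) :
    (∑ i ∈ Finset.Icc (j - 1) (p + q - 1), Cc p (q - 1) i) = Cc p q j := by
  have hrec (i : ℤ) : Cc p q (i + 1) = Cc p q (i + 1 + 1) + Cc p (q - 1) i := by
    simpa only [add_sub_cancel_right] using Cc_eq_add p hq (i + 1)
  have hvanish (i : ℤ) (hi : p + q - 1 < i) : Cc p q (i + 1) = 0 :=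
    Cc_eq_zero_of_lt p (by omega)
  rw [← Int.eq_sum_Icc_of_eq_add hvanish hrec, sub_add_cancel]

/-- for `p ≥ 1`, `q ≥ 2`, `2 ≤ j ≤ p + q`,
  `∑_{i=j−1}^{p+q−1} C_{p,q−1}(i) = C_{p,q}(j)`. -/
theorem sum_C_step (p q : ℤ) (hp : 1 ≤ p) (hq : 2 ≤ q)
    (j : ℤ) (hj2 : 2 ≤ j) (hjpq : j ≤ p + q) :
    (∑ i ∈ Finset.Icc (j - 1) (p + q - 1), Cc p (q - 1) i) = Cc p q j :=
  sum_C_step_general p q hp hq j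
end

section
/- For all integers p ≥ 1 and q ≥ 2, one has A_{p,q}(1) + B_{p,q}(1) + C_{p,q}(1) = 2·(A_{p,q}(2) + B_{p,q}(2) + C_{p,q}(2)). -/
/-! All three quantities are sums over the box `[1, p] × [1, q]` against the weight
`F p s * F q t`, and the identity already holds term by term, whatever the weight. For `j = 1`
the kernel of `A` vanishes on the box while those of `B` and `Cc` are both `P s t`; for `j = 2`
they are `[s = t = 1]`, `P (s - 1) t` and `P s (t - 1)`, which add up to `P s t` by Pascal's
rule. -/

open Finset

lemma P_of_nonpos_left {s : ℤ} (hs : s ≤ 0) (t : ℤ) : P s t = 0 := by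
  rw [P, if_neg (by omega)]

lemma P_of_nonpos_right (s : ℤ) {t : ℤ} (ht : t ≤ 0) : P s t = 0 := by
  rw [P, if_neg (by omega)]

lemma P_natCast_add_one (m n : ℕ) : P (m + 1) (n + 1) = (m + n).choose m := by
  rw [P, if_pos (by omega), intChoose, if_neg (by omega)]
  congr 3 <;> omega

lemma P_one_left {t : ℤ} (ht : 1 ≤ t) : P 1 t = 1 := by
  obtain ⟨n, rfl⟩ : ∃ n : ℕ, t = n + 1 := ⟨(t - 1).toNat, by omega⟩
  simpa using P_natCast_add_one 0 n

lemma P_one_right {s : ℤ} (hs : 1 ≤ s) : P s 1 = 1 := by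
  obtain ⟨m, rfl⟩ : ∃ m : ℕ, s = m + 1 := ⟨(s - 1).toNat, by omega⟩
  simpa using P_natCast_add_one m 0

lemma P_pascal_of_two_le {s t : ℤ} (hs : 2 ≤ s) (ht : 2 ≤ t) :
    P s t = P (s - 1) t + P s (t - 1) := by
  obtain ⟨m, rfl⟩ : ∃ m : ℕ, s = m + 1 + 1 := ⟨(s - 2).toNat, by omega⟩
  obtain ⟨n, rfl⟩ : ∃ n : ℕ, t = n + 1 + 1 := ⟨(t - 2).toNat, by omega⟩
  have h := P_natCast_add_one (m + 1) (n + 1)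
  have hl := P_natCast_add_one m (n + 1)
  have hr := P_natCast_add_one (m + 1) n
  push_cast at h hl hr
  rw [add_sub_cancel_right, add_sub_cancel_right, h, hl, hr,
    show m + 1 + (n + 1) = m + n + 1 + 1 by ring, Nat.choose_succ_succ',
    show m + (n + 1) = m + n + 1 by ring, show m + 1 + n = m + n + 1 by ring]
  push_cast; ring

lemma P_pascal (s t : ℤ) :
    P s t = P (s - 1) t + P s (t - 1) + if s = 1 ∧ t = 1 then 1 else 0 := by
  rcases le_or_gt s 0 with hs | hs
  · rw [P_of_nonpos_left hs, P_of_nonpos_left (by omega), P_of_nonpos_left hs, if_neg (by omega)]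
    simp
  rcases le_or_gt t 0 with ht | ht
  · rw [P_of_nonpos_right _ ht, P_of_nonpos_right _ ht, P_of_nonpos_right _ (by omega),
      if_neg (by omega)]
    simp
  rcases eq_or_lt_of_le (show 1 ≤ s by omega) with rfl | hs
  · rcases eq_or_lt_of_le (show 1 ≤ t by omega) with rfl | ht
    · norm_num [P_one_left, P_of_nonpos_left, P_of_nonpos_right]
    · rw [P_one_left ht.le, sub_self, P_of_nonpos_left le_rfl, P_one_left (by omega),
        if_neg (by omega)]
      simp
  rcases eq_or_lt_of_le (show 1 ≤ t by omega) with rfl | ht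
  · rw [P_one_right hs.le, sub_self, P_of_nonpos_right _ le_rfl, P_one_right (by omega),
      if_neg (by omega)]
    simp
  rw [P_pascal_of_two_le hs ht, if_neg (by omega), add_zero]

noncomputable def boxSum (p q : ℤ) (g : ℤ → ℤ → ℤ) : ℤ :=
  ∑ s ∈ Icc 1 p, ∑ t ∈ Icc 1 q, F p s * F q t * g s t

section boxSum

variable (p q : ℤ)

lemma boxSum_congr {g h : ℤ → ℤ → ℤ}
    (hgh : ∀ s t, 1 ≤ s → 1 ≤ t → g s t = h s t) :
    boxSum p q g = boxSum p q h :=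
  sum_congr rfl fun s hs => sum_congr rfl fun t ht => by
    rw [hgh s t (mem_Icc.1 hs).1 (mem_Icc.1 ht).1]

lemma boxSum_add (g h : ℤ → ℤ → ℤ) :
    boxSum p q g + boxSum p q h = boxSum p q (fun s t => g s t + h s t) := by
  simp only [boxSum, mul_add, sum_add_distrib]

lemma mul_boxSum (c : ℤ) (g : ℤ → ℤ → ℤ) :
    c * boxSum p q g = boxSum p q (fun s t => c * g s t) := by
  simp only [boxSum, mul_sum]
  exact sum_congr rfl fun s _ => sum_congr rfl fun t _ => by ring

lemma A_eq_boxSum (j : ℤ) : A p q j = boxSum p q (fun s t => if s + t = j then 1 else 0) := by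
  refine sum_congr rfl fun s _ => sum_congr rfl fun t _ => ?_
  rw [mul_ite, mul_one, mul_zero]

lemma B_eq_boxSum (j : ℤ) : B p q j = boxSum p q (fun s t => P (s - j + 1) t) := rfl

lemma Cc_eq_boxSum {j : ℤ} (hj : 1 ≤ j) :
    Cc p q j = boxSum p q (fun s t => P s (t - j + 1)) := by
  refine sum_congr rfl fun s _ => sum_subset (Icc_subset_Icc_left hj) fun t ht htj => ?_
  rw [mem_Icc] at ht htj
  rw [P_of_nonpos_right _ (by omega), mul_zero]

lemma A_add_B_add_Cc {j : ℤ} (hj : 1 ≤ j) :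
    A p q j + B p q j + Cc p q j = boxSum p q (fun s t =>
      (if s + t = j then 1 else 0) + P (s - j + 1) t + P s (t - j + 1)) := by
  rw [A_eq_boxSum, B_eq_boxSum, Cc_eq_boxSum p q hj, boxSum_add, boxSum_add]

end boxSum

theorem value_at_one_eq_twice_value_at_two_general (p q : ℤ) :
    A p q 1 + B p q 1 + Cc p q 1 = 2 * (A p q 2 + B p q 2 + Cc p q 2) := by
  rw [A_add_B_add_Cc p q le_rfl, A_add_B_add_Cc p q one_le_two, mul_boxSum]
  refine boxSum_congr p q fun s t hs ht => ?_
  rw [sub_add_cancel, sub_add_cancel, show s - 2 + 1 = s - 1 by ring,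
    show t - 2 + 1 = t - 1 by ring, P_pascal s t]
  split_ifs <;> omega

/-- for `p ≥ 1`, `q ≥ 2`,
  `A_{p,q}(1) + B_{p,q}(1) + C_{p,q}(1) = 2·(A_{p,q}(2) + B_{p,q}(2) + C_{p,q}(2))`. -/
theorem value_at_one_eq_twice_value_at_two (p q : ℤ) (hp : 1 ≤ p) (hq : 2 ≤ q) :
    A p q 1 + B p q 1 + Cc p q 1 = 2 * (A p q 2 + B p q 2 + Cc p q 2) :=
  value_at_one_eq_twice_value_at_two_general p q
end

section
/- Let s ≥ 1, t ≥ 1 and l be integers with 1 ≤ l ≤ s. The number of maximal chains of Fin s × Fin (t+1) (componentwise order) having exactly l elements with second coordinate 0 equals the number of maximal chains of Fin (s−l+1) × Fin t (componentwise order). -/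
/-!
A maximal chain of the grid is a lattice path, and the workhorse is that a point comparable with
every element of a maximal chain belongs to it. Hence the points of a maximal chain `C` on the
bottom row form an initial segment; if there are `l = c + 1` of them, they are exactly
`Iic (c, 0)`, so `(c, 1)` is comparable with all of `C` and lies in it, and every other point of
`C` lies above `(c, 1)`. The upper part `Ici (c, 1)` is the image of the smaller grid
`Fin (s - l + 1) × Fin t` under the order embedding `(i, j) ↦ (i + c, j + 1)`; pulling `C` back
along it, and conversely adjoining `Iic (c, 0)` to the image of a maximal chain of the smaller
grid, are mutually inverse bijections between the two families of maximal chains.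
-/

open Set

section Chain

variable {α : Type*} {r : α → α → Prop} {C : Set α}

theorem IsMaxChain.mem_of_forall_rel (hC : IsMaxChain r C) {x : α}
    (hx : ∀ y ∈ C, x ≠ y → r x y ∨ r y x) : x ∈ C :=
  (hC.2 (hC.1.insert hx) (subset_insert x C)).symm ▸ mem_insert x C

theorem IsChain.isMaxChain_of_forall_rel (hC : IsChain r C)
    (h : ∀ x, (∀ y ∈ C, x ≠ y → r x y ∨ r y x) → x ∈ C) : IsMaxChain r C :=
  ⟨hC, fun _ hD hCD => hCD.antisymm fun x hx => h x fun _ hy hxy => hD hx (hCD hy) hxy⟩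

end Chain

def OrderEmbedding.prodMap {α β γ δ : Type*} [LE α] [LE β] [LE γ] [LE δ]
    (f : α ↪o β) (g : γ ↪o δ) : α × γ ↪o β × δ where
  toFun := Prod.map f g
  inj' := f.injective.prodMap g.injective
  map_rel_iff' := by simp [Prod.le_def, f.map_rel_iff, g.map_rel_iff]

section OrderEmbedding

variable {α β : Type*} [PartialOrder α] [PartialOrder β] (e : β ↪o α)

theorem IsMaxChain.preimage_orderEmbedding {C : Set α} (hC : IsMaxChain (· ≤ ·) C)
    (hlow : ∀ z ∈ C, z ∉ range e → ∀ p, z ≤ e p) : IsMaxChain (· ≤ ·) (e ⁻¹' C) := by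
  refine (hC.1.preimage_embedding e).isMaxChain_of_forall_rel fun p hp => ?_
  refine hC.mem_of_forall_rel fun z hz _ => ?_
  by_cases hze : z ∈ range e
  · obtain ⟨q, rfl⟩ := hze
    rcases eq_or_ne p q with rfl | hpq
    · exact Or.inl le_rfl
    · exact (hp q hz hpq).imp e.le_iff_le.2 e.le_iff_le.2
  · exact Or.inr (hlow z hz hze p)

theorem IsMaxChain.Iic_union_image_orderEmbedding [OrderBot β] {a : α}
    (ha : IsChain (· ≤ ·) (Iic a)) (hcov : a ⋖ e ⊥) (hrange : Ici (e ⊥) ⊆ range e)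
    {D : Set β} (hD : IsMaxChain (· ≤ ·) D) : IsMaxChain (· ≤ ·) (Iic a ∪ e '' D) := by
  have hchain : IsChain (· ≤ ·) (Iic a ∪ e '' D) := by
    refine isChain_union.2 ⟨ha, hD.1.image e, ?_⟩
    rintro x hx _ ⟨p, -, rfl⟩ -
    exact Or.inl ((mem_Iic.1 hx).trans (hcov.le.trans (e.monotone bot_le)))
  refine hchain.isMaxChain_of_forall_rel fun x hx => ?_
  by_cases hxe : x ∈ range e
  · obtain ⟨p, rfl⟩ := hxe
    refine Or.inr ⟨p, hD.mem_of_forall_rel fun q hq hpq => ?_, rfl⟩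
    exact (hx (e q) (Or.inr ⟨q, hq, rfl⟩) (e.injective.ne hpq)).imp e.le_iff_le.1 e.le_iff_le.1
  · have hne : x ≠ e ⊥ := fun h => hxe ⟨⊥, h.symm⟩
    have hx_lt : x < e ⊥ :=
      ((hx _ (Or.inr ⟨⊥, hD.bot_mem, rfl⟩) hne).resolve_right (hxe <| hrange ·)).lt_of_ne hne
    left
    by_contra hxa
    have hxa' : x ≠ a := by rintro rfl; exact hxa le_rfl
    exact hcov.2 (((hx a (Or.inl le_rfl) hxa').resolve_left hxa).lt_of_ne hxa'.symm) hx_lt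

end OrderEmbedding

section Product

variable {α β : Type*} [LinearOrder α] [PartialOrder β] [OrderBot β]

theorem isChain_Iic_mk_bot (i : α) : IsChain (· ≤ ·) (Iic (i, (⊥ : β))) := by
  rintro x hx y hy -
  rcases le_total x.1 y.1 with h | h
  · exact Or.inl ⟨h, hx.2.trans bot_le⟩
  · exact Or.inr ⟨h, hy.2.trans bot_le⟩

theorem IsMaxChain.mk_bot_mem_of_le {C : Set (α × β)} (hC : IsMaxChain (· ≤ ·) C) {i j : α}
    (hji : j ≤ i) (hi : (i, ⊥) ∈ C) : (j, ⊥) ∈ C := by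
  have hj : (j, (⊥ : β)) ≤ (i, ⊥) := ⟨hji, le_rfl⟩
  refine hC.mem_of_forall_rel fun z hz _ => ?_
  rcases hC.1.total hi hz with h | h
  · exact Or.inl (hj.trans h)
  · exact (isChain_Iic_mk_bot i).total hj h

end Product

theorem Fin.mem_iff_val_lt_ncard_of_isLowerSet {n : ℕ} {S : Set (Fin n)} (hS : IsLowerSet S)
    (i : Fin n) : i ∈ S ↔ (i : ℕ) < S.ncard := by
  constructor
  · intro hi
    have := ncard_le_ncard (fun _ hj => hS hj hi : Iic i ⊆ S)
    rw [← Finset.coe_Iic, ncard_coe_finset, Fin.card_Iic] at this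
    omega
  · intro hlt
    by_contra hi
    have := ncard_le_ncard (show S ⊆ Iio i from fun _ hj => lt_of_not_ge fun hij => hi (hS hij hj))
    rw [← Finset.coe_Iio, ncard_coe_finset, Fin.card_Iio] at this
    omega

theorem IsMaxChain.mk_zero_mem_iff {s m : ℕ} {C : Set (Fin s × Fin (m + 1))}
    (hC : IsMaxChain (· ≤ ·) C) (i : Fin s) :
    (i, 0) ∈ C ↔ (i : ℕ) < {x ∈ C | x.2 = 0}.ncard := by
  have hrow : {x ∈ C | x.2 = 0} = (·, 0) '' {j | (j, 0) ∈ C} := by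
    ext ⟨j, y⟩
    constructor
    · rintro ⟨hj, rfl⟩
      exact ⟨j, hj, rfl⟩
    · rintro ⟨k, hk, ⟨⟩⟩
      exact ⟨hk, rfl⟩
  rw [hrow, ncard_image_of_injective _ (Prod.mk_left_injective 0)]
  refine Fin.mem_iff_val_lt_ncard_of_isLowerSet (S := {j | (j, 0) ∈ C}) (fun j k hkj hj => ?_) i
  simpa [bot_eq_zero] using hC.mk_bot_mem_of_le hkj (by simpa [bot_eq_zero] using hj)

section Grid

def shiftEmb (c : ℕ) {d b : ℕ} :
    Fin (d + 1) × Fin (b + 1) ↪o Fin (c + (d + 1)) × Fin (b + 1 + 1) :=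
  (Fin.natAddOrderEmb c).prodMap (Fin.succOrderEmb (b + 1))

def turningPoint (c : ℕ) {d b : ℕ} : Fin (c + (d + 1)) × Fin (b + 1 + 1) :=
  (Fin.natAdd c 0, 0)

variable {c d b : ℕ}

theorem shiftEmb_apply (p : Fin (d + 1) × Fin (b + 1)) :
    shiftEmb c p = (Fin.natAdd c p.1, p.2.succ) :=
  rfl

theorem turningPoint_covBy_shiftEmb_bot :
    turningPoint c ⋖ shiftEmb c (⊥ : Fin (d + 1) × Fin (b + 1)) := by
  rw [shiftEmb_apply, turningPoint, Prod.fst_bot, Prod.snd_bot, bot_eq_zero, bot_eq_zero,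
    Prod.mk_covBy_mk_iff_right, Fin.covBy_iff]
  exact Nat.covBy_iff_add_one_eq.2 rfl

theorem Ici_shiftEmb_bot_subset_range :
    Ici (shiftEmb c (⊥ : Fin (d + 1) × Fin (b + 1))) ⊆ range (shiftEmb c) := by
  rintro x ⟨h1, h2⟩
  have hx2 : x.2 ≠ 0 := (Fin.succ_pos _).trans_le h2 |>.ne'
  obtain ⟨i, hi⟩ : x.1 ∈ range (Fin.natAdd c) := by
    rw [Fin.range_natAdd_eq_Ici]; exact h1
  obtain ⟨j, hj⟩ : x.2 ∈ range Fin.succ := by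
    rw [Fin.range_succ]; exact hx2
  exact ⟨(i, j), Prod.ext hi hj⟩

theorem turningPoint_lt_shiftEmb (p : Fin (d + 1) × Fin (b + 1)) :
    turningPoint c < shiftEmb c p :=
  turningPoint_covBy_shiftEmb_bot.lt.trans_le ((shiftEmb c).monotone bot_le)

theorem isChain_Iic_turningPoint :
    IsChain (· ≤ ·) (Iic (turningPoint c : Fin (c + (d + 1)) × Fin (b + 1 + 1))) := by
  have := isChain_Iic_mk_bot (β := Fin (b + 1 + 1)) (Fin.natAdd c (0 : Fin (d + 1)))
  rwa [bot_eq_zero] at this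

theorem mem_Iic_turningPoint_iff {x : Fin (c + (d + 1)) × Fin (b + 1 + 1)} :
    x ∈ Iic (turningPoint c) ↔ (x.1 : ℕ) ≤ c ∧ x.2 = 0 := by
  simp [turningPoint, Prod.le_def, Fin.le_def]

theorem ncard_Iic_turningPoint :
    (Iic (turningPoint c : Fin (c + (d + 1)) × Fin (b + 1 + 1))).ncard = c + 1 := by
  rw [turningPoint, ← Iic_prod_Iic, ncard_prod, ← Finset.coe_Iic, ← Finset.coe_Iic,
    ncard_coe_finset, ncard_coe_finset, Fin.card_Iic, Fin.card_Iic]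
  simp

section MaxChain

variable {C : Set (Fin (c + (d + 1)) × Fin (b + 1 + 1))}

theorem IsMaxChain.Iic_turningPoint_subset (hC : IsMaxChain (· ≤ ·) C)
    (hrow : {x ∈ C | x.2 = 0}.ncard = c + 1) :
    Iic (turningPoint c) ⊆ C := by
  intro x hx
  rw [mem_Iic_turningPoint_iff] at hx
  rw [← Prod.mk.eta (p := x), hx.2, hC.mk_zero_mem_iff, hrow]
  omega

theorem IsMaxChain.subset_Iic_turningPoint_union_range (hC : IsMaxChain (· ≤ ·) C)
    (hrow : {x ∈ C | x.2 = 0}.ncard = c + 1) :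
    C ⊆ Iic (turningPoint c) ∪ range (shiftEmb c) := by
  intro z hz
  rcases hC.1.total (hC.Iic_turningPoint_subset hrow (mem_Iic.2 le_rfl)) hz with h | h
  · by_cases hz2 : z.2 = 0
    · have := (hC.mk_zero_mem_iff z.1).1 (by rwa [← hz2, Prod.mk.eta])
      exact Or.inl (mem_Iic_turningPoint_iff.2 ⟨by omega, hz2⟩)
    · exact Or.inr (Ici_shiftEmb_bot_subset_range ⟨h.1, Fin.one_le_of_ne_zero hz2⟩)
  · exact Or.inl h

theorem IsMaxChain.preimage_shiftEmb (hC : IsMaxChain (· ≤ ·) C)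
    (hrow : {x ∈ C | x.2 = 0}.ncard = c + 1) :
    IsMaxChain (· ≤ ·) (shiftEmb c ⁻¹' C) := by
  refine hC.preimage_orderEmbedding _ fun z hz hze p => ?_
  have hz : z ≤ turningPoint c := (hC.subset_Iic_turningPoint_union_range hrow hz).resolve_right hze
  exact hz.trans (turningPoint_lt_shiftEmb p).le

theorem IsMaxChain.Iic_turningPoint_union_image_preimage_shiftEmb (hC : IsMaxChain (· ≤ ·) C)
    (hrow : {x ∈ C | x.2 = 0}.ncard = c + 1) :
    Iic (turningPoint c) ∪ shiftEmb c '' (shiftEmb c ⁻¹' C) = C := by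
  rw [image_preimage_eq_inter_range, union_inter_distrib_left,
    union_eq_right.2 (hC.Iic_turningPoint_subset hrow),
    inter_eq_left.2 (hC.subset_Iic_turningPoint_union_range hrow)]

end MaxChain

theorem IsMaxChain.Iic_turningPoint_union_image_shiftEmb {D : Set (Fin (d + 1) × Fin (b + 1))}
    (hD : IsMaxChain (· ≤ ·) D) : IsMaxChain (· ≤ ·) (Iic (turningPoint c) ∪ shiftEmb c '' D) :=
  hD.Iic_union_image_orderEmbedding _ isChain_Iic_turningPoint turningPoint_covBy_shiftEmb_bot
    Ici_shiftEmb_bot_subset_range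

variable (c) in
theorem ncard_sep_Iic_turningPoint_union_image_shiftEmb (D : Set (Fin (d + 1) × Fin (b + 1))) :
    {x ∈ Iic (turningPoint c) ∪ shiftEmb c '' D | x.2 = 0}.ncard = c + 1 := by
  have hrow : {x ∈ Iic (turningPoint c) ∪ shiftEmb c '' D | x.2 = 0} = Iic (turningPoint c) := by
    ext x
    constructor
    · rintro ⟨hx | ⟨p, -, rfl⟩, hx2⟩
      · exact hx
      · exact absurd hx2 (Fin.succ_ne_zero _)
    · exact fun hx => ⟨Or.inl hx, (mem_Iic_turningPoint_iff.1 hx).2⟩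
  rw [hrow, ncard_Iic_turningPoint]

variable (c) in
theorem preimage_Iic_turningPoint_union_image_shiftEmb (D : Set (Fin (d + 1) × Fin (b + 1))) :
    shiftEmb c ⁻¹' (Iic (turningPoint c) ∪ shiftEmb c '' D) = D := by
  have hempty : shiftEmb c ⁻¹' Iic (turningPoint c) = (∅ : Set (Fin (d + 1) × Fin (b + 1))) :=
    eq_empty_of_forall_notMem fun p hp => (turningPoint_lt_shiftEmb p).not_ge hp
  rw [preimage_union, hempty, empty_union, preimage_image_eq _ (shiftEmb c).injective]

end Grid

def maxChainShiftEquiv (c d b : ℕ) :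
    {C : Set (Fin (c + (d + 1)) × Fin (b + 1 + 1)) //
        IsMaxChain (· ≤ ·) C ∧ {x ∈ C | x.2 = 0}.ncard = c + 1} ≃
      {D : Set (Fin (d + 1) × Fin (b + 1)) // IsMaxChain (· ≤ ·) D} where
  toFun C := ⟨shiftEmb c ⁻¹' C, C.2.1.preimage_shiftEmb C.2.2⟩
  invFun D := ⟨Iic (turningPoint c) ∪ shiftEmb c '' D, D.2.Iic_turningPoint_union_image_shiftEmb,
    ncard_sep_Iic_turningPoint_union_image_shiftEmb c D.1⟩
  left_inv C := Subtype.ext (C.2.1.Iic_turningPoint_union_image_preimage_shiftEmb C.2.2)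
  right_inv D := Subtype.ext (preimage_Iic_turningPoint_union_image_shiftEmb c D.1)

theorem card_maxChains_restricted_eq_general (s t l : ℕ) (ht : 1 ≤ t)
    (hl1 : 1 ≤ l) (hls : l ≤ s) :
    Nat.card {C : Set (Fin s × Fin (t + 1)) //
        IsMaxChain (· ≤ ·) C ∧ {x ∈ C | x.2 = 0}.ncard = l}
      = Nat.card {C : Set (Fin (s - l + 1) × Fin t) // IsMaxChain (· ≤ ·) C} := by
  obtain ⟨b, rfl⟩ : ∃ b, t = b + 1 := ⟨t - 1, by omega⟩
  obtain ⟨c, rfl⟩ : ∃ c, l = c + 1 := ⟨l - 1, by omega⟩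
  obtain ⟨d, rfl⟩ : ∃ d, s = c + (d + 1) := ⟨s - c - 1, by omega⟩
  rw [show c + (d + 1) - (c + 1) + 1 = d + 1 by omega]
  exact Nat.card_congr (maxChainShiftEquiv c d b)

/-- for `s, t ≥ 1` and `1 ≤ l ≤ s`, the number of maximal chains
    of `Fin s × Fin (t+1)` (componentwise order) having exactly `l` elements with
    second coordinate `0` equals the number of maximal chains of
    `Fin (s−l+1) × Fin t` (componentwise order). -/
theorem card_maxChains_restricted_eq (s t l : ℕ) (hs : 1 ≤ s) (ht : 1 ≤ t)
    (hl1 : 1 ≤ l) (hls : l ≤ s) :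
    Nat.card {C : Set (Fin s × Fin (t + 1)) //
        IsMaxChain (· ≤ ·) C ∧ {x ∈ C | x.2 = 0}.ncard = l}
      = Nat.card {C : Set (Fin (s - l + 1) × Fin t) // IsMaxChain (· ≤ ·) C} :=
  card_maxChains_restricted_eq_general s t l ht hl1 hls
end
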